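/- arXiv:2310.08664 — 3 statements merged into one kernel-verified Lean document; each statement's English description precedes it below -/
import Mathlib

section
/- For every n ≥ 1 and every k, |{σ ∈ SEP(n) : B_1^{+,n}(σ)=n and A_n^{+,−}(σ)=k}| = |{σ ∈ SEP(n) : B_1^{+,n}(σ)=n and A_n^{−,+}(σ)=k}|; that is, the distributions of A_n^{+,−} and of A_n^{−,+} coincide under the uniform measure on SEP(n) conditioned on {B_1^{+,n}=n}. -/
open Finset Filter Real
open scoped Classical

/-- `σ` contains the pattern `τ` (a permutation of `Fin k` given as a function). -/
def ContainsPattern {n k : ℕ} (σ : Equiv.Perm (Fin n)) (τ : Fin k → Fin k) : Prop :=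
  ∃ f : Fin k → Fin n, StrictMono f ∧ ∀ a b : Fin k, τ a < τ b ↔ σ (f a) < σ (f b)

/-- A permutation is separable iff it avoids the patterns 2413 and 3142. -/
def Separable {n : ℕ} (σ : Equiv.Perm (Fin n)) : Prop :=
  ¬ ContainsPattern σ (![1, 3, 0, 2] : Fin 4 → Fin 4) ∧
  ¬ ContainsPattern σ (![2, 0, 3, 1] : Fin 4 → Fin 4)

/-- The set of separable permutations of `[n]`. -/
noncomputable def SEP (n : ℕ) : Finset (Equiv.Perm (Fin n)) :=
  Finset.univ.filter fun σ => Separable σ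

/-- `IsAltSeq σ s l` : `l` is a strictly increasing list of indices along which the values of `σ`
alternate, starting with an ascent if `s = true` and starting with a descent if `s = false`. -/
def IsAltSeq {n : ℕ} (σ : Equiv.Perm (Fin n)) (s : Bool) (l : List (Fin n)) : Prop :=
  l.Chain' (· < ·) ∧
  ∀ j : ℕ, ∀ hj : j + 1 < l.length,
    if decide (j % 2 = 0) = s then
      σ (l.get ⟨j, Nat.lt_of_succ_lt hj⟩) < σ (l.get ⟨j + 1, hj⟩)
    else
      σ (l.get ⟨j + 1, hj⟩) < σ (l.get ⟨j, Nat.lt_of_succ_lt hj⟩)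

/-- The length of the longest alternating subsequence of `σ` of type `(s, e)`, where
`true` stands for ascent and `false` for descent.  An alternating subsequence starting with
an ascent ends with a descent iff its length is odd (and similarly in the other cases), so the
type is encoded by the parity constraint; a singleton counts as a subsequence of types
`(+,-)` and `(-,+)` but not of types `(+,+)` and `(-,-)`. -/
noncomputable def altTypeLen {n : ℕ} (σ : Equiv.Perm (Fin n)) (s e : Bool) : ℕ :=
  sSup {k | ∃ l : List (Fin n), IsAltSeq σ s l ∧ l.length = k ∧
    k % 2 = (if s = e then 0 else 1)}

/-- The length `Aₙ(σ)` of the longest alternating subsequence of `σ`. -/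
noncomputable def altLen {n : ℕ} (σ : Equiv.Perm (Fin n)) : ℕ :=
  sSup {k | ∃ l : List (Fin n), (IsAltSeq σ true l ∨ IsAltSeq σ false l) ∧
    l.length = k ∧ 1 ≤ k}

/-- Expectation with respect to the uniform probability measure on `SEP n`. -/
noncomputable def sepExp (n : ℕ) (f : Equiv.Perm (Fin n) → ℝ) : ℝ :=
  (∑ σ ∈ SEP n, f σ) / (SEP n).card

/-- Variance with respect to the uniform probability measure on `SEP n`. -/
noncomputable def sepVar (n : ℕ) (f : Equiv.Perm (Fin n) → ℝ) : ℝ :=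
  sepExp n (fun σ => (f σ - sepExp n f) ^ 2)

/-- `B₁^{+,n}(σ)`: the length of the first indecomposable block (0-indexed positions). -/
noncomputable def Bplus {n : ℕ} (σ : Equiv.Perm (Fin n)) : ℕ :=
  sInf {j | 1 ≤ j ∧ ∀ i : Fin n, (i : ℕ) < j → (σ i : ℕ) < j}

/-- `B₁^{-,n}(σ)`: the length of the first skew indecomposable block (0-indexed positions). -/
noncomputable def Bminus {n : ℕ} (σ : Equiv.Perm (Fin n)) : ℕ :=
  sInf {j | 1 ≤ j ∧ ∀ i : Fin n, (i : ℕ) < j → n - j ≤ (σ i : ℕ)}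

/-- Expectation over indecomposable separable permutations of `[n]`, i.e. the conditional
expectation under the uniform measure on `SEP n` given `{B₁^{+,n} = n}`. -/
noncomputable def indecExp (n : ℕ) (f : Equiv.Perm (Fin n) → ℝ) : ℝ :=
  (∑ σ ∈ (SEP n).filter (fun σ => Bplus σ = n), f σ) /
    ((SEP n).filter (fun σ => Bplus σ = n)).card

/-!
The reverse-complement `σ ↦ rev ∘ σ ∘ rev` is an involution of `SEP n`: it fixes both forbidden
patterns `2413` and `3142`. It preserves `{B₁^{+,n} = n}`, because `σ` maps some proper prefix
`[j]` onto itself iff it maps the complementary suffix onto itself, and the reverse-complement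
turns suffixes into prefixes. Finally, an alternating subsequence of type `(+,-)` has odd length,
so reading its reverse-complement backwards gives one of type `(-,+)` of the same length.
-/

open Equiv Set

theorem Equiv.Perm.mapsTo_compl_iff {α : Type*} [Finite α] (σ : Perm α) {s : Set α} :
    MapsTo σ sᶜ sᶜ ↔ MapsTo σ s s := by
  suffices key : ∀ t : Set α, MapsTo σ t t → MapsTo σ tᶜ tᶜ from
    ⟨fun h => compl_compl s ▸ key sᶜ h, key s⟩
  intro t ht
  exact ((t.toFinite.injOn_iff_bijOn_of_mapsTo ht).mp σ.injective.injOn).surjOn.mapsTo_compl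
    σ.injective

/-- The reverse-complement `i ↦ n - 1 - σ (n - 1 - i)`. -/
def revCompl {n : ℕ} (σ : Perm (Fin n)) : Perm (Fin n) :=
  (Fin.revPerm.trans σ).trans Fin.revPerm

@[simp]
theorem revCompl_apply {n : ℕ} (σ : Perm (Fin n)) (i : Fin n) :
    revCompl σ i = (σ i.rev).rev := rfl

@[simp]
theorem revCompl_revCompl {n : ℕ} (σ : Perm (Fin n)) : revCompl (revCompl σ) = σ := by
  ext i
  simp

theorem ContainsPattern.of_revCompl {n k : ℕ} {σ : Perm (Fin n)} {τ : Fin k → Fin k}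
    (h : ContainsPattern (revCompl σ) τ) : ContainsPattern σ (fun a => (τ a.rev).rev) := by
  obtain ⟨f, hf, hτ⟩ := h
  refine ⟨fun a => (f a.rev).rev, fun a b hab => Fin.rev_lt_rev.mpr (hf (Fin.rev_lt_rev.mpr hab)),
    fun a b => ?_⟩
  rw [Fin.rev_lt_rev, hτ, revCompl_apply, revCompl_apply, Fin.rev_lt_rev]

theorem Separable.revCompl {n : ℕ} {σ : Perm (Fin n)} (h : Separable σ) :
    Separable (revCompl σ) := by
  have h2413 : (fun a : Fin 4 => ((![1, 3, 0, 2] : Fin 4 → Fin 4) a.rev).rev) = ![1, 3, 0, 2] := by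
    decide
  have h3142 : (fun a : Fin 4 => ((![2, 0, 3, 1] : Fin 4 → Fin 4) a.rev).rev) = ![2, 0, 3, 1] := by
    decide
  exact ⟨fun hc => h.1 (h2413 ▸ hc.of_revCompl), fun hc => h.2 (h3142 ▸ hc.of_revCompl)⟩

def initSeg (n j : ℕ) : Set (Fin n) := {i | (i : ℕ) < j}

theorem one_le_bplus {n : ℕ} (σ : Perm (Fin n)) : 1 ≤ Bplus σ :=
  le_csInf ⟨n + 1, le_add_self, fun i _ => (σ i).isLt.trans n.lt_succ_self⟩ fun _ hj => hj.1

theorem bplus_eq_iff {n : ℕ} (hn : 0 < n) (σ : Perm (Fin n)) :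
    Bplus σ = n ↔ ∀ j, 0 < j → j < n → ¬ MapsTo σ (initSeg n j) (initSeg n j) := by
  have hmem : n ∈ {j | 1 ≤ j ∧ ∀ i : Fin n, (i : ℕ) < j → (σ i : ℕ) < j} :=
    ⟨hn, fun i _ => (σ i).isLt⟩
  constructor
  · intro h j hj hjn hmaps
    have : Bplus σ ≤ j := Nat.sInf_le ⟨hj, fun i hi => hmaps hi⟩
    omega
  · intro h
    refine le_antisymm (Nat.sInf_le hmem) (le_csInf ⟨n, hmem⟩ fun j ⟨hj, hmaps⟩ => ?_)
    by_contra! hjn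
    exact h j hj hjn fun i hi => hmaps i hi

theorem mapsTo_initSeg_revCompl_iff {n j : ℕ} (hj : j ≤ n) (σ : Perm (Fin n)) :
    MapsTo (revCompl σ) (initSeg n j) (initSeg n j) ↔
      MapsTo σ (initSeg n (n - j)) (initSeg n (n - j)) := by
  rw [← σ.mapsTo_compl_iff]
  simp only [MapsTo, initSeg, mem_compl_iff, Set.mem_ofPred_eq, revCompl_apply, not_lt]
  constructor
  · intro h i hi
    have := @h i.rev
    simp only [Fin.val_rev, Fin.rev_rev] at this
    omega
  · intro h i hi
    have := @h i.rev
    simp only [Fin.val_rev] at this ⊢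
    omega

theorem bplus_revCompl {n : ℕ} {σ : Perm (Fin n)} (h : Bplus σ = n) : Bplus (revCompl σ) = n := by
  have hn : 0 < n := h ▸ one_le_bplus σ
  rw [bplus_eq_iff hn] at h ⊢
  intro j hj hjn hmaps
  rw [mapsTo_initSeg_revCompl_iff hjn.le] at hmaps
  exact h (n - j) (by omega) (by omega) hmaps

theorem IsAltSeq.revCompl {n : ℕ} {σ : Perm (Fin n)} {s : Bool} {l : List (Fin n)}
    (hl : IsAltSeq σ s l) (hodd : Odd l.length) :
    IsAltSeq (revCompl σ) (!s) (l.map Fin.rev).reverse := by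
  obtain ⟨hchain, halt⟩ := hl
  refine ⟨List.isChain_reverse.mpr ((List.isChain_map Fin.rev).mpr
    (hchain.imp fun {_ _} h => Fin.rev_lt_rev.mpr h)), fun j hj => ?_⟩
  simp only [List.length_reverse, List.length_map] at hj
  -- step `j` of the new sequence is step `i` of `l`, read backwards
  obtain ⟨i, hi⟩ : ∃ i, l.length = i + j + 2 := ⟨l.length - j - 2, by omega⟩
  have hpar : decide (i % 2 = 0) = s ↔ decide (j % 2 = 0) = !s := by
    obtain ⟨r, hr⟩ := hodd
    cases s <;> simp <;> omega
  have key := halt i (by omega)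
  simp only [List.get_eq_getElem, List.getElem_reverse, List.getElem_map, revCompl_apply,
    Fin.rev_rev, Fin.rev_lt_rev, List.length_map] at key ⊢
  have e1 : l.length - 1 - j = i + 1 := by omega
  have e2 : l.length - 1 - (j + 1) = i := by omega
  simp only [e1, e2]
  by_cases hs : decide (i % 2 = 0) = s
  · simpa only [if_pos hs, if_pos (hpar.mp hs)] using key
  · simpa only [if_neg hs, if_neg (mt hpar.mpr hs)] using key

theorem altTypeLen_revCompl {n : ℕ} (σ : Perm (Fin n)) {s e : Bool} (hse : s ≠ e) :
    altTypeLen (revCompl σ) (!s) (!e) = altTypeLen σ s e := by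
  have hse' : (!s) ≠ !e := by simpa using hse
  unfold altTypeLen
  congr 1
  ext k
  simp only [Set.mem_ofPred_eq, if_neg hse, if_neg hse']
  constructor
  · rintro ⟨l, hl, rfl, hodd⟩
    have hl' := hl.revCompl (Nat.odd_iff.mpr hodd)
    rw [revCompl_revCompl, Bool.not_not] at hl'
    exact ⟨_, hl', by simp, hodd⟩
  · rintro ⟨l, hl, rfl, hodd⟩
    exact ⟨_, hl.revCompl (Nat.odd_iff.mpr hodd), by simp, hodd⟩

theorem revCompl_mem_filter {n k : ℕ} {s e : Bool} (hse : s ≠ e) {σ : Perm (Fin n)}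
    (hσ : σ ∈ (SEP n).filter fun σ => Bplus σ = n ∧ altTypeLen σ s e = k) :
    revCompl σ ∈ (SEP n).filter fun σ => Bplus σ = n ∧ altTypeLen σ (!s) (!e) = k := by
  simp only [SEP, Finset.mem_filter, Finset.mem_univ, true_and] at hσ ⊢
  obtain ⟨hsep, hB, hA⟩ := hσ
  exact ⟨hsep.revCompl, bplus_revCompl hB, (altTypeLen_revCompl σ hse).trans hA⟩

theorem altTypeLen_pm_mp_same_cond_general (n : ℕ) (k : ℕ) :
    ((SEP n).filter (fun σ => Bplus σ = n ∧ altTypeLen σ true false = k)).card =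
      ((SEP n).filter (fun σ => Bplus σ = n ∧ altTypeLen σ false true = k)).card := by
  refine card_nbij' revCompl revCompl (fun σ hσ => ?_) (fun σ hσ => ?_)
    (fun σ _ => revCompl_revCompl σ) (fun σ _ => revCompl_revCompl σ)
  · exact revCompl_mem_filter (s := true) (e := false) (by decide) hσ
  · exact revCompl_mem_filter (s := false) (e := true) (by decide) hσ

/-- The distributions of `Aₙ^{+,-}` and `Aₙ^{-,+}` coincide on `SEP n` conditioned on
`{B₁^{+,n} = n}`. -/
theorem altTypeLen_pm_mp_same_cond (n : ℕ) (hn : 1 ≤ n) (k : ℕ) :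
    ((SEP n).filter (fun σ => Bplus σ = n ∧ altTypeLen σ true false = k)).card =
      ((SEP n).filter (fun σ => Bplus σ = n ∧ altTypeLen σ false true = k)).card :=
  altTypeLen_pm_mp_same_cond_general n k
end

section
/- For every n ≥ 2, |{σ ∈ SEP(n) : B_1^{+,n}(σ)=n}| = |{σ ∈ SEP(n) : B_1^{−,n}(σ)=n}| = s_n/2, where s_n = |SEP(n)|; that is, exactly half of the separable permutations of [n] are indecomposable and exactly half are skew indecomposable. -/
open Finset Filter Real
open scoped Classical

/-! Auxiliary development -/

/-- direct-sum decomposable -/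
def DP {n : ℕ} (σ : Equiv.Perm (Fin n)) : Prop :=
  ∃ j, 1 ≤ j ∧ j < n ∧ ∀ i : Fin n, (i : ℕ) < j → (σ i : ℕ) < j

/-- skew-sum decomposable -/
def DM {n : ℕ} (σ : Equiv.Perm (Fin n)) : Prop :=
  ∃ j, 1 ≤ j ∧ j < n ∧ ∀ i : Fin n, (i : ℕ) < j → n - j ≤ (σ i : ℕ)

lemma bplus_eq_iff_s9 {n : ℕ} (hn : 1 ≤ n) (σ : Equiv.Perm (Fin n)) :
    Bplus σ = n ↔ ¬ DP σ := by
  have hmem : n ∈ {j | 1 ≤ j ∧ ∀ i : Fin n, (i : ℕ) < j → (σ i : ℕ) < j} :=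
    ⟨hn, fun i _ => (σ i).isLt⟩
  constructor
  · rintro h ⟨j, hj1, hjn, hj⟩
    have hle : Bplus σ ≤ j := by rw [Bplus]; exact Nat.sInf_le ⟨hj1, hj⟩
    omega
  · intro h
    have h1 : Bplus σ ≤ n := Nat.sInf_le hmem
    have h2 := Nat.sInf_mem (⟨n, hmem⟩ : Set.Nonempty _)
    rcases lt_or_eq_of_le h1 with h3 | h3
    · exact absurd ⟨Bplus σ, h2.1, h3, h2.2⟩ h
    · exact h3

lemma bminus_eq_iff {n : ℕ} (hn : 1 ≤ n) (σ : Equiv.Perm (Fin n)) :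
    Bminus σ = n ↔ ¬ DM σ := by
  have hmem : n ∈ {j | 1 ≤ j ∧ ∀ i : Fin n, (i : ℕ) < j → n - j ≤ (σ i : ℕ)} :=
    ⟨hn, fun i _ => by omega⟩
  constructor
  · rintro h ⟨j, hj1, hjn, hj⟩
    have hle : Bminus σ ≤ j := by rw [Bminus]; exact Nat.sInf_le ⟨hj1, hj⟩
    omega
  · intro h
    have h1 : Bminus σ ≤ n := Nat.sInf_le hmem
    have h2 := Nat.sInf_mem (⟨n, hmem⟩ : Set.Nonempty _)
    rcases lt_or_eq_of_le h1 with h3 | h3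
    · exact absurd ⟨Bminus σ, h2.1, h3, h2.2⟩ h
    · exact h3

/-- the complement of a permutation -/
def cpl {n : ℕ} (σ : Equiv.Perm (Fin n)) : Equiv.Perm (Fin n) := σ.trans Fin.revPerm

lemma cpl_apply {n : ℕ} (σ : Equiv.Perm (Fin n)) (i : Fin n) : cpl σ i = (σ i).rev := rfl

lemma cpl_val {n : ℕ} (σ : Equiv.Perm (Fin n)) (i : Fin n) :
    (cpl σ i : ℕ) = n - 1 - (σ i : ℕ) := by
  rw [cpl_apply, Fin.val_rev]; omega

lemma cpl_cpl {n : ℕ} (σ : Equiv.Perm (Fin n)) : cpl (cpl σ) = σ := by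
  ext i
  simp [cpl_apply, Fin.rev_rev]

lemma contains_cpl {n k : ℕ} (σ : Equiv.Perm (Fin n)) (τ : Fin k → Fin k) :
    ContainsPattern (cpl σ) τ ↔ ContainsPattern σ (fun a => (τ a).rev) := by
  constructor
  · rintro ⟨f, hf, hp⟩
    refine ⟨f, hf, fun a b => ?_⟩
    rw [Fin.rev_lt_rev, hp b a, cpl_apply, cpl_apply, Fin.rev_lt_rev]
  · rintro ⟨f, hf, hp⟩
    refine ⟨f, hf, fun a b => ?_⟩
    rw [cpl_apply, cpl_apply, Fin.rev_lt_rev, ← hp b a, Fin.rev_lt_rev]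

lemma sep_cpl {n : ℕ} (σ : Equiv.Perm (Fin n)) : Separable σ ↔ Separable (cpl σ) := by
  have e1 : (fun a => ((![1, 3, 0, 2] : Fin 4 → Fin 4) a).rev) = (![2, 0, 3, 1] : Fin 4 → Fin 4) := by
    decide
  have e2 : (fun a => ((![2, 0, 3, 1] : Fin 4 → Fin 4) a).rev) = (![1, 3, 0, 2] : Fin 4 → Fin 4) := by
    decide
  unfold Separable
  rw [contains_cpl, contains_cpl, e1, e2, and_comm]

lemma bplus_cpl {n : ℕ} (σ : Equiv.Perm (Fin n)) : Bplus σ = Bminus (cpl σ) := by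
  unfold Bplus Bminus
  congr 1
  ext j
  simp only [Set.mem_setOf_eq]
  refine and_congr_right fun hj1 => forall_congr' fun i => imp_congr_right fun hij => ?_
  have h1 := (σ i).isLt
  rw [cpl_val]
  omega

lemma dp_cpl {n : ℕ} (σ : Equiv.Perm (Fin n)) (h : DP σ) : DM (cpl σ) := by
  obtain ⟨j, h1, h2, h3⟩ := h
  refine ⟨j, h1, h2, fun i hi => ?_⟩
  have := h3 i hi
  have := (σ i).isLt
  rw [cpl_val]
  omega

lemma dm_cpl {n : ℕ} (σ : Equiv.Perm (Fin n)) (h : DM σ) : DP (cpl σ) := by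
  obtain ⟨j, h1, h2, h3⟩ := h
  refine ⟨j, h1, h2, fun i hi => ?_⟩
  have := h3 i hi
  have := (σ i).isLt
  rw [cpl_val]
  omega

lemma card_filter_lt (N v : ℕ) (hvN : v ≤ N) :
    ((Finset.univ : Finset (Fin N)).filter fun p : Fin N => (p : ℕ) < v).card = v := by
  apply Finset.card_eq_of_bijective (fun i hi => (⟨i, lt_of_lt_of_le hi hvN⟩ : Fin N))
  · intro a ha
    simp only [Finset.mem_filter, Finset.mem_univ, true_and] at ha
    exact ⟨a, ha, rfl⟩
  · intro i hi
    simp [hi]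
  · intro i j hi hj h
    exact congrArg Fin.val h

lemma card_filter_perm_lt {N : ℕ} (σ : Equiv.Perm (Fin N)) (v : ℕ) (hvN : v ≤ N) :
    ((Finset.univ : Finset (Fin N)).filter fun p : Fin N => ((σ p : Fin N) : ℕ) < v).card = v := by
  rw [Finset.card_equiv σ (t := (Finset.univ : Finset (Fin N)).filter fun q : Fin N => (q : ℕ) < v)
    (fun i => by simp)]
  exact card_filter_lt N v hvN

/-- no permutation is both decomposable and skew decomposable -/
lemma not_both {n : ℕ} (σ : Equiv.Perm (Fin n)) : ¬ (DP σ ∧ DM σ) := by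
  rintro ⟨⟨j, hj1, hjn, hj⟩, ⟨k, hk1, hkn, hk⟩⟩
  set m := min j k with hm
  have hmn : m ≤ n := le_trans (min_le_left _ _) (le_of_lt hjn)
  have hcard : ((Finset.univ : Finset (Fin n)).filter fun p : Fin n => (p : ℕ) < m).card = m :=
    card_filter_lt n m hmn
  have hmaps : ∀ p ∈ (Finset.univ : Finset (Fin n)).filter fun p : Fin n => (p : ℕ) < m,
      (σ p : ℕ) ∈ Finset.Ico (n - k) j := by
    intro p hp
    simp only [Finset.mem_filter, Finset.mem_univ, true_and] at hp
    rw [Finset.mem_Ico]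
    exact ⟨hk p (by omega), hj p (by omega)⟩
  have hinj : Set.InjOn (fun p => ((σ p : Fin n) : ℕ))
      ((Finset.univ : Finset (Fin n)).filter fun p : Fin n => (p : ℕ) < m) := by
    intro a _ b _ h
    exact σ.injective (Fin.ext h)
  have := Finset.card_le_card_of_injOn _ hmaps hinj
  rw [hcard, Nat.card_Ico] at this
  omega

/-! The "delete the last entry" pattern of a permutation -/

/-- the pattern of `σ` on the first `m` positions, assuming the last value is `< m` -/
def shr {m : ℕ} (σ : Equiv.Perm (Fin (m + 1))) (hvm : (σ (Fin.last m) : ℕ) < m)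
    (i : Fin m) : Fin m :=
  if h : (σ i.castSucc : ℕ) < (σ (Fin.last m) : ℕ) then ⟨(σ i.castSucc : ℕ), lt_trans h hvm⟩
  else ⟨(σ i.castSucc : ℕ) - 1, by have := (σ i.castSucc).isLt; omega⟩

lemma shr_ne {m : ℕ} (σ : Equiv.Perm (Fin (m + 1))) (i : Fin m) :
    (σ i.castSucc : ℕ) ≠ (σ (Fin.last m) : ℕ) := by
  intro h
  have := σ.injective (Fin.ext h)
  exact absurd (congrArg Fin.val this) (by have := i.isLt; simp [Fin.last]; omega)

lemma shr_lt_iff {m : ℕ} (σ : Equiv.Perm (Fin (m + 1))) (hvm : (σ (Fin.last m) : ℕ) < m)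
    (i k : Fin m) : shr σ hvm i < shr σ hvm k ↔ σ i.castSucc < σ k.castSucc := by
  have hi := shr_ne σ i
  have hk := shr_ne σ k
  have h1 := (σ i.castSucc).isLt
  have h2 := (σ k.castSucc).isLt
  unfold shr
  rw [Fin.lt_def, Fin.lt_def]
  split_ifs <;> simp <;> omega

lemma shr_inj {m : ℕ} (σ : Equiv.Perm (Fin (m + 1))) (hvm : (σ (Fin.last m) : ℕ) < m) :
    Function.Injective (shr σ hvm) := by
  intro i k h
  have h1 := shr_lt_iff σ hvm i k
  have h2 := shr_lt_iff σ hvm k i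
  have : σ i.castSucc = σ k.castSucc := by
    apply le_antisymm
    · rw [← not_lt]; intro hc; rw [← h2] at hc; exact absurd h (ne_of_gt hc)
    · rw [← not_lt]; intro hc; rw [← h1] at hc; exact absurd h (ne_of_lt hc)
  exact Fin.castSucc_injective m (σ.injective this)

/-- the pattern as a permutation -/
noncomputable def shrP {m : ℕ} (σ : Equiv.Perm (Fin (m + 1)))
    (hvm : (σ (Fin.last m) : ℕ) < m) : Equiv.Perm (Fin m) :=
  Equiv.ofBijective (shr σ hvm) (Finite.injective_iff_bijective.mp (shr_inj σ hvm))

lemma shrP_apply {m : ℕ} (σ : Equiv.Perm (Fin (m + 1))) (hvm : (σ (Fin.last m) : ℕ) < m)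
    (i : Fin m) : shrP σ hvm i = shr σ hvm i := rfl

lemma sep_shr {m : ℕ} (σ : Equiv.Perm (Fin (m + 1))) (hvm : (σ (Fin.last m) : ℕ) < m)
    (hs : Separable σ) : Separable (shrP σ hvm) := by
  have key : ∀ τ : Fin 4 → Fin 4, ContainsPattern (shrP σ hvm) τ → ContainsPattern σ τ := by
    rintro τ ⟨f, hf, hp⟩
    refine ⟨fun a => (f a).castSucc, fun a b hab => by
      simpa [Fin.castSucc_lt_castSucc_iff] using hf hab, fun a b => ?_⟩
    rw [hp a b, shrP_apply, shrP_apply, shr_lt_iff]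
  exact ⟨fun h => hs.1 (key _ h), fun h => hs.2 (key _ h)⟩

lemma shr_val' {m : ℕ} (σ : Equiv.Perm (Fin (m + 1))) (hvm : (σ (Fin.last m) : ℕ) < m)
    (x : Fin (m + 1)) (hx : (x : ℕ) < m) :
    ((shr σ hvm ⟨(x : ℕ), hx⟩ : Fin m) : ℕ) =
      if (σ x : ℕ) < (σ (Fin.last m) : ℕ) then (σ x : ℕ) else (σ x : ℕ) - 1 := by
  unfold shr
  split_ifs with h1 h2 h3 <;> first | rfl | exact absurd h1 h2 | exact absurd h3 h1

lemma shr_ne' {m : ℕ} (σ : Equiv.Perm (Fin (m + 1))) (x : Fin (m + 1)) (hx : (x : ℕ) < m) :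
    (σ x : ℕ) ≠ (σ (Fin.last m) : ℕ) :=
  shr_ne σ ⟨(x : ℕ), hx⟩

lemma contains3142 {m : ℕ} (σ : Equiv.Perm (Fin (m + 1))) (p q b l : Fin (m + 1))
    (h1 : (q : ℕ) < p) (h2 : (p : ℕ) < b) (h3 : (b : ℕ) < l)
    (v1 : (σ p : ℕ) < (σ l : ℕ)) (v2 : (σ l : ℕ) < (σ q : ℕ)) (v3 : (σ q : ℕ) < (σ b : ℕ)) :
    ContainsPattern σ (![2, 0, 3, 1] : Fin 4 → Fin 4) := by
  have e0 : ∀ x : Fin 4, (x : ℕ) = 0 → (![q, p, b, l] : Fin 4 → Fin (m + 1)) x = q := by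
    intro x hx; rw [show x = 0 from Fin.ext hx]; rfl
  have e1 : ∀ x : Fin 4, (x : ℕ) = 1 → (![q, p, b, l] : Fin 4 → Fin (m + 1)) x = p := by
    intro x hx; rw [show x = 1 from Fin.ext hx]; rfl
  have e2 : ∀ x : Fin 4, (x : ℕ) = 2 → (![q, p, b, l] : Fin 4 → Fin (m + 1)) x = b := by
    intro x hx; rw [show x = 2 from Fin.ext hx]; rfl
  have e3 : ∀ x : Fin 4, (x : ℕ) = 3 → (![q, p, b, l] : Fin 4 → Fin (m + 1)) x = l := by
    intro x hx; rw [show x = 3 from Fin.ext hx]; rfl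
  refine ⟨![q, p, b, l], ?_, ?_⟩
  · intro x y hxy
    rw [Fin.lt_def] at hxy
    rw [Fin.lt_def]
    have hx4 := x.isLt
    have hy4 := y.isLt
    interval_cases hx : (x : ℕ) <;> interval_cases hy : (y : ℕ) <;>
      simp only [hx, hy, e0, e1, e2, e3] <;> omega
  · intro a c
    rw [Fin.lt_def]
    have ha4 := a.isLt
    have hc4 := c.isLt
    have hp0 : ∀ x : Fin 4, ((![2, 0, 3, 1] : Fin 4 → Fin 4) x : ℕ) =
        if (x : ℕ) = 0 then 2 else if (x : ℕ) = 1 then 0 else if (x : ℕ) = 2 then 3 else 1 := by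
      intro x
      have := x.isLt
      interval_cases hx : (x : ℕ)
      · rw [show x = 0 from Fin.ext hx]; rfl
      · rw [show x = 1 from Fin.ext hx]; rfl
      · rw [show x = 2 from Fin.ext hx]; rfl
      · rw [show x = 3 from Fin.ext hx]; rfl
    rw [hp0 a, hp0 c]
    interval_cases ha : (a : ℕ) <;> interval_cases hc : (c : ℕ) <;>
      simp only [ha, hc, e0, e1, e2, e3, Fin.lt_def] <;> simp <;> omega

/-- Core lemma: if the pattern of `σ` with the last entry deleted is decomposable
(at `j`), and the last value is strictly inside, then `σ` is decomposable. -/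
lemma helper {m : ℕ} (σ : Equiv.Perm (Fin (m + 1))) (hsep : Separable σ)
    (hv0 : 0 < (σ (Fin.last m) : ℕ)) (hvm : (σ (Fin.last m) : ℕ) < m)
    (j : ℕ) (hj1 : 1 ≤ j) (hjm : j < m)
    (hdp : ∀ i : Fin m, (i : ℕ) < j → (shr σ hvm i : ℕ) < j) : DP σ := by
  have h1 : ∀ i : Fin m, j ≤ (i : ℕ) → j ≤ (shr σ hvm i : ℕ) := by
    intro i hi
    by_contra hc
    push_neg at hc
    have hnotmem : i ∉ (Finset.univ : Finset (Fin m)).filter fun p : Fin m => (p : ℕ) < j := by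
      simp; omega
    have hmaps : ∀ a ∈ insert i ((Finset.univ : Finset (Fin m)).filter fun p : Fin m => (p : ℕ) < j),
        shr σ hvm a ∈ (Finset.univ : Finset (Fin m)).filter fun p : Fin m => (p : ℕ) < j := by
      intro a ha
      rcases Finset.mem_insert.mp ha with rfl | ha
      · simp only [Finset.mem_filter, Finset.mem_univ, true_and]; exact hc
      · simp only [Finset.mem_filter, Finset.mem_univ, true_and] at ha ⊢
        exact hdp a ha
    have hinj : Set.InjOn (shr σ hvm)
        (insert i ((Finset.univ : Finset (Fin m)).filter fun p : Fin m => (p : ℕ) < j) :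
          Finset (Fin m)) :=
      fun a _ b _ h => shr_inj σ hvm h
    have hcle := Finset.card_le_card_of_injOn _ hmaps hinj
    rw [Finset.card_insert_of_notMem hnotmem, card_filter_lt m j (le_of_lt hjm)] at hcle
    omega
  rcases le_or_gt j (σ (Fin.last m) : ℕ) with hjv | hvj
  · -- last value ≥ j : σ decomposes at j
    refine ⟨j, hj1, by omega, fun i hi => ?_⟩
    have him : (i : ℕ) < m := by omega
    have hne := shr_ne' σ i him
    have hlt := (σ i).isLt
    have hthis := hdp ⟨(i : ℕ), him⟩ hi
    rw [shr_val' σ hvm i him] at hthis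
    split_ifs at hthis with h <;> omega
  · -- last value < j : σ decomposes at the last value
    have h2 : ∀ p : Fin (m + 1), (σ p : ℕ) < (σ (Fin.last m) : ℕ) → (p : ℕ) < j := by
      intro p hp
      have hpl : p ≠ Fin.last m := by
        intro h; rw [h] at hp; omega
      have hpm : (p : ℕ) < m := by
        have h5 := p.isLt
        rcases Nat.lt_or_ge (p : ℕ) m with h | h
        · exact h
        · exact absurd (Fin.ext (by simp [Fin.last]; omega : (p : ℕ) = (Fin.last m : ℕ))) hpl
      by_contra hc
      push_neg at hc
      have hthis := h1 ⟨(p : ℕ), hpm⟩ (show j ≤ (p : ℕ) from hc)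
      rw [shr_val' σ hvm p hpm] at hthis
      split_ifs at hthis with h <;> omega
    obtain ⟨b, hbval⟩ : ∃ b : Fin (m + 1), (b : ℕ) = j := ⟨⟨j, by omega⟩, rfl⟩
    have hbm : (b : ℕ) < m := by omega
    have hσb : j < (σ b : ℕ) := by
      have h1b := h1 ⟨(b : ℕ), hbm⟩ (show j ≤ (b : ℕ) by omega)
      have hbne : (σ b : ℕ) ≠ (σ (Fin.last m) : ℕ) := shr_ne' σ b hbm
      have hbv : (σ (Fin.last m) : ℕ) < (σ b : ℕ) := by
        rcases Nat.lt_or_ge (σ b : ℕ) (σ (Fin.last m) : ℕ) with h | h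
        · have := h2 b h; omega
        · omega
      rw [shr_val' σ hvm b hbm] at h1b
      split_ifs at h1b with h <;> omega
    have h3 : ∀ p q : Fin (m + 1), (q : ℕ) < (p : ℕ) → (p : ℕ) < j →
        (σ (Fin.last m) : ℕ) < (σ q : ℕ) → (σ p : ℕ) < (σ (Fin.last m) : ℕ) → False := by
      intro p q hqp hpj hq hp
      have hqj : (σ q : ℕ) ≤ j := by
        have hqm : (q : ℕ) < m := by omega
        have hthis := hdp ⟨(q : ℕ), hqm⟩ (show (q : ℕ) < j by omega)
        rw [shr_val' σ hvm q hqm] at hthis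
        split_ifs at hthis with h <;> omega
      exact hsep.2 (contains3142 σ p q b (Fin.last m) hqp (by omega)
        (by rw [Fin.val_last]; omega) hp hq (by omega))
    refine ⟨(σ (Fin.last m) : ℕ), hv0, by omega, fun i hi => ?_⟩
    by_contra hc
    push_neg at hc
    have hil : i ≠ Fin.last m := by
      intro h
      have : (i : ℕ) = m := by rw [h]; rfl
      omega
    have hvi : (σ (Fin.last m) : ℕ) < (σ i : ℕ) := by
      rcases Nat.lt_or_ge (σ (Fin.last m) : ℕ) (σ i : ℕ) with h | h
      · exact h
      · exfalso
        exact hil (σ.injective (Fin.ext (by omega)))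
    have hsub : ((Finset.univ : Finset (Fin (m + 1))).filter
          fun p : Fin (m + 1) => (σ p : ℕ) < (σ (Fin.last m) : ℕ)) ⊆
        (Finset.univ : Finset (Fin (m + 1))).filter fun p : Fin (m + 1) => (p : ℕ) < (i : ℕ) := by
      intro p hp
      simp only [Finset.mem_filter, Finset.mem_univ, true_and] at hp ⊢
      have hpj := h2 p hp
      rcases Nat.lt_trichotomy (p : ℕ) (i : ℕ) with h | h | h
      · exact h
      · exfalso
        have hpe : p = i := Fin.ext h
        rw [hpe] at hp; omega
      · exact (h3 p i h hpj hvi hp).elim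
    have hc1 := Finset.card_le_card hsub
    rw [card_filter_perm_lt σ (σ (Fin.last m) : ℕ) (by omega),
      card_filter_lt (m + 1) (i : ℕ) (by omega)] at hc1
    omega

/-- Every separable permutation of `[n]`, `n ≥ 2`, is decomposable or skew decomposable. -/
lemma main_dichotomy : ∀ (n : ℕ) (σ : Equiv.Perm (Fin n)), 2 ≤ n → Separable σ → DP σ ∨ DM σ := by
  intro n
  induction n with
  | zero => intro σ h; omega
  | succ m ih =>
    intro σ hn hsep
    have hm1 : 1 ≤ m := by omega
    have hvlt : (σ (Fin.last m) : ℕ) < m + 1 := (σ (Fin.last m)).isLt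
    have hlastval : ((Fin.last m : Fin (m + 1)) : ℕ) = m := rfl
    have hnei : ∀ i : Fin (m + 1), (i : ℕ) < m → (σ i : ℕ) ≠ (σ (Fin.last m) : ℕ) := by
      intro i hi h
      have : i = Fin.last m := σ.injective (Fin.ext h)
      rw [this, hlastval] at hi
      omega
    rcases Nat.eq_or_lt_of_le (Nat.le_of_lt_succ hvlt) with hvm | hvm'
    · -- last value is m : σ decomposes at m
      left
      refine ⟨m, hm1, by omega, fun i hi => ?_⟩
      have := hnei i hi
      omega
    · have hvm : (σ (Fin.last m) : ℕ) < m := by omega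
      rcases Nat.eq_zero_or_pos (σ (Fin.last m) : ℕ) with hv0 | hv0
      · -- last value is 0 : σ skew decomposes at m
        right
        refine ⟨m, hm1, by omega, fun i hi => ?_⟩
        have := hnei i hi
        omega
      · -- last value strictly inside : use the induction hypothesis
        have hm2 : 2 ≤ m := by omega
        rcases ih (shrP σ hvm) hm2 (sep_shr σ hvm hsep) with ⟨j, hj1, hjm, hdp⟩ | ⟨j, hj1, hjm, hdm⟩
        · exact Or.inl (helper σ hsep hv0 hvm j hj1 hjm fun i hi => hdp i hi)
        · -- pass to the complement
          have hsep' : Separable (cpl σ) := (sep_cpl σ).mp hsep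
          have hv' : (cpl σ (Fin.last m) : ℕ) = m - (σ (Fin.last m) : ℕ) := by
            rw [cpl_val]; omega
          have hv0' : 0 < (cpl σ (Fin.last m) : ℕ) := by omega
          have hvm' : (cpl σ (Fin.last m) : ℕ) < m := by omega
          have hshr : ∀ i : Fin m, (shr (cpl σ) hvm' i : ℕ) = m - 1 - (shr σ hvm i : ℕ) := by
            intro i
            have hcs : ((i.castSucc : Fin (m + 1)) : ℕ) < m + 1 := i.castSucc.isLt
            have hcsm : ((i.castSucc : Fin (m + 1)) : ℕ) < m := by
              have := i.isLt
              simpa using this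
            have hne := shr_ne' σ i.castSucc hcsm
            have h1 := (σ i.castSucc).isLt
            have e1 : (shr (cpl σ) hvm' i : ℕ) =
                if (cpl σ i.castSucc : ℕ) < (cpl σ (Fin.last m) : ℕ)
                then (cpl σ i.castSucc : ℕ) else (cpl σ i.castSucc : ℕ) - 1 := by
              have := shr_val' (cpl σ) hvm' i.castSucc hcsm
              rw [show (⟨((i.castSucc : Fin (m + 1)) : ℕ), hcsm⟩ : Fin m) = i from
                Fin.ext (by simp)] at this
              exact this
            have e2 : (shr σ hvm i : ℕ) =
                if (σ i.castSucc : ℕ) < (σ (Fin.last m) : ℕ)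
                then (σ i.castSucc : ℕ) else (σ i.castSucc : ℕ) - 1 := by
              have := shr_val' σ hvm i.castSucc hcsm
              rw [show (⟨((i.castSucc : Fin (m + 1)) : ℕ), hcsm⟩ : Fin m) = i from
                Fin.ext (by simp)] at this
              exact this
            rw [e1, e2, cpl_val, cpl_val]
            split_ifs with ha hb hb <;> omega
          have hdp' : ∀ i : Fin m, (i : ℕ) < j → (shr (cpl σ) hvm' i : ℕ) < j := by
            intro i hi
            have hd := hdm i hi
            rw [shrP_apply] at hd
            have h2 := (shr σ hvm i).isLt
            rw [hshr i]
            omega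
          have hDP := helper (cpl σ) hsep' hv0' hvm' j hj1 hjm hdp'
          have := dp_cpl _ hDP
          rw [cpl_cpl] at this
          exact Or.inr this


/-- For `n ≥ 2`, exactly half of the separable permutations of `[n]` are indecomposable and
exactly half are skew indecomposable. -/
theorem half_indecomposable (n : ℕ) (hn : 2 ≤ n) :
    ((SEP n).filter (fun σ => Bplus σ = n)).card =
      ((SEP n).filter (fun σ => Bminus σ = n)).card ∧
    2 * ((SEP n).filter (fun σ => Bplus σ = n)).card = (SEP n).card := by
  have hn1 : 1 ≤ n := by omega
  have hsepmem : ∀ σ : Equiv.Perm (Fin n), σ ∈ SEP n ↔ Separable σ := by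
    intro σ; simp [SEP]
  have hA : ∀ σ : Equiv.Perm (Fin n), σ ∈ (SEP n).filter (fun σ => Bplus σ = n) ↔
      (Separable σ ∧ ¬ DP σ) := by
    intro σ
    rw [Finset.mem_filter, hsepmem, bplus_eq_iff_s9 hn1]
  have hB : ∀ σ : Equiv.Perm (Fin n), σ ∈ (SEP n).filter (fun σ => Bminus σ = n) ↔
      (Separable σ ∧ ¬ DM σ) := by
    intro σ
    rw [Finset.mem_filter, hsepmem, bminus_eq_iff hn1]
  have hcards : ((SEP n).filter (fun σ => Bplus σ = n)).card =
      ((SEP n).filter (fun σ => Bminus σ = n)).card := by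
    apply Finset.card_bij' (fun σ _ => cpl σ) (fun σ _ => cpl σ)
    · intro σ hσ
      rw [hA] at hσ
      rw [hB]
      refine ⟨(sep_cpl σ).mp hσ.1, fun h => hσ.2 ?_⟩
      have h2 := dm_cpl _ h
      rwa [cpl_cpl] at h2
    · intro σ hσ
      rw [hB] at hσ
      rw [hA]
      refine ⟨(sep_cpl σ).mp hσ.1, fun h => hσ.2 ?_⟩
      have h2 := dp_cpl _ h
      rwa [cpl_cpl] at h2
    · intro σ _; exact cpl_cpl σ
    · intro σ _; exact cpl_cpl σ
  refine ⟨hcards, ?_⟩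
  have hdisj : Disjoint ((SEP n).filter (fun σ => Bplus σ = n))
      ((SEP n).filter (fun σ => Bminus σ = n)) := by
    rw [Finset.disjoint_left]
    intro σ h1 h2
    rw [hA] at h1
    rw [hB] at h2
    rcases main_dichotomy n σ hn h1.1 with h | h
    · exact h1.2 h
    · exact h2.2 h
  have hunion : ((SEP n).filter (fun σ => Bplus σ = n)) ∪
      ((SEP n).filter (fun σ => Bminus σ = n)) = SEP n := by
    apply Finset.Subset.antisymm
    · exact Finset.union_subset (Finset.filter_subset _ _) (Finset.filter_subset _ _)
    · intro σ hσ
      rw [Finset.mem_union, hA, hB]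
      rw [hsepmem] at hσ
      by_cases h : DP σ
      · exact Or.inr ⟨hσ, fun h2 => not_both σ ⟨h, h2⟩⟩
      · exact Or.inl ⟨hσ, h⟩
  have := Finset.card_union_of_disjoint hdisj
  rw [hunion] at this
  omega
end

section
/- Let s_n = |SEP(n)| denote the number of separable permutations of [n]. Then for every n ≥ 2, s_n = s_1·s_{n−1} + (1/2)∑_{j=2}^{n−1} s_j·s_{n−j} + (1/2)s_n (equivalently, s_n = 2·s_{n−1} + ∑_{j=2}^{n−1} s_j·s_{n−j}), with s_1 = 1. -/
open Finset Filter Real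
open scoped Classical

/-!
A permutation of length `n ≥ 1` factors uniquely as `α ⊕ β` with `α` sum-indecomposable of
length `j = Bplus σ`, and `α ⊕ β` is separable iff `α` and `β` are (the patterns `2413` and `3142`
are sum-indecomposable, so an occurrence cannot straddle the two blocks). Hence
`sₙ = ∑_{j=1}^{n} aⱼ sₙ₋ⱼ`, where `aⱼ` counts the sum-indecomposable separable permutations of
length `j`, with `s₀ = a₁ = 1`.

For `n ≥ 2` a separable permutation is sum- or skew-decomposable: grow a proper prefix whose
values form an interval; unless it is already a block, the next value lies below or above the
interval, and either the prefix grows further or `3142` (resp. `2413`) appears. It is never both,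
and complementation exchanges the two kinds, so `aₙ = sₙ / 2`.
-/

section Patterns

variable {n k : ℕ}

theorem not_containsPattern_of_lt (σ : Equiv.Perm (Fin n)) (τ : Fin k → Fin k) (h : n < k) :
    ¬ ContainsPattern σ τ := by
  rintro ⟨f, hf, -⟩
  have := Fintype.card_le_of_injective f hf.injective
  simp only [Fintype.card_fin] at this
  omega

theorem containsPattern_of_eq_comp {σ : Equiv.Perm (Fin n)} {τ : Fin k → Fin k}
    {f g : Fin k → Fin n} (hf : StrictMono f) (hg : StrictMono g) (h : ∀ a, σ (f a) = g (τ a)) :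
    ContainsPattern σ τ :=
  ⟨f, hf, fun a b => by rw [h, h, hg.lt_iff_lt]⟩

theorem containsPattern_3142 {σ : Equiv.Perm (Fin n)} {p₀ p₁ p₂ p₃ : Fin n}
    (h₀₁ : p₀ < p₁) (h₁₂ : p₁ < p₂) (h₂₃ : p₂ < p₃)
    (hv₁₃ : σ p₁ < σ p₃) (hv₃₀ : σ p₃ < σ p₀) (hv₀₂ : σ p₀ < σ p₂) :
    ContainsPattern σ ![2, 0, 3, 1] :=
  containsPattern_of_eq_comp (f := ![p₀, p₁, p₂, p₃]) (g := ![σ p₁, σ p₃, σ p₀, σ p₂])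
    (by simp [Fin.forall_fin_succ, Fin.strictMono_iff_lt_succ, *])
    (by simp [Fin.forall_fin_succ, Fin.strictMono_iff_lt_succ, *])
    (by simp [Fin.forall_fin_succ])

theorem containsPattern_iff_of_comp {m : ℕ} {σ : Equiv.Perm (Fin n)} {α : Equiv.Perm (Fin m)}
    {e e' : Fin m → Fin n} (he : StrictMono e) (he' : StrictMono e')
    (h : ∀ i, σ (e i) = e' (α i)) {τ : Fin k → Fin k} :
    ContainsPattern α τ ↔
      ∃ f : Fin k → Fin m, StrictMono (e ∘ f) ∧ ∀ a b, τ a < τ b ↔ σ (e (f a)) < σ (e (f b)) := by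
  have hmono : ∀ f : Fin k → Fin m, StrictMono (e ∘ f) ↔ StrictMono f := fun f =>
    ⟨fun hf _ _ hab => he.lt_iff_lt.mp (hf hab), he.comp⟩
  simp only [ContainsPattern, hmono, h, he'.lt_iff_lt]

end Patterns

section Complement

variable {n : ℕ}

/-- The paper's complement `σᶜ(i) = n + 1 - σ(i)`. -/
def complement (σ : Equiv.Perm (Fin n)) : Equiv.Perm (Fin n) := σ.trans Fin.revPerm

@[simp]
theorem complement_apply (σ : Equiv.Perm (Fin n)) (i : Fin n) : complement σ i = (σ i).rev :=
  rfl

theorem val_complement (σ : Equiv.Perm (Fin n)) (i : Fin n) :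
    (complement σ i : ℕ) = n - 1 - σ i := by
  rw [complement_apply, Fin.val_rev]
  omega

@[simp]
theorem complement_complement (σ : Equiv.Perm (Fin n)) : complement (complement σ) = σ := by
  ext i
  simp

theorem containsPattern_complement_iff {k : ℕ} (σ : Equiv.Perm (Fin n)) (τ : Fin k → Fin k) :
    ContainsPattern (complement σ) (Fin.rev ∘ τ) ↔ ContainsPattern σ τ := by
  simp only [ContainsPattern, Function.comp_apply, complement_apply, Fin.rev_lt_rev]
  exact exists_congr fun f => and_congr_right fun _ => forall_comm

theorem separable_complement_iff (σ : Equiv.Perm (Fin n)) :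
    Separable (complement σ) ↔ Separable σ := by
  have h₁ := containsPattern_complement_iff σ ![2, 0, 3, 1]
  have h₂ := containsPattern_complement_iff σ ![1, 3, 0, 2]
  rw [show Fin.rev ∘ ![2, 0, 3, 1] = ![1, 3, 0, 2] by decide] at h₁
  rw [show Fin.rev ∘ ![1, 3, 0, 2] = ![2, 0, 3, 1] by decide] at h₂
  rw [Separable, Separable, h₁, h₂, and_comm]

end Complement

section SumSplit

variable {n : ℕ}

/-- `σ = α ⊕ β` with `α` a permutation of `Fin j`. -/
def SumSplitsAt (σ : Equiv.Perm (Fin n)) (j : ℕ) : Prop :=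
  ∀ i : Fin n, (i : ℕ) < j → (σ i : ℕ) < j

theorem sumSplitsAt_self (σ : Equiv.Perm (Fin n)) : SumSplitsAt σ n := fun i _ => (σ i).isLt

theorem SumSplitsAt.le_apply {σ : Equiv.Perm (Fin n)} {j : ℕ} (h : SumSplitsAt σ j) {i : Fin n}
    (hi : j ≤ i) : j ≤ σ i := by
  set T : Finset (Fin n) := univ.filter fun i => (i : ℕ) < j
  -- `σ` maps the prefix `T` injectively into itself, hence onto itself.
  have hT : T.map σ.toEmbedding = T := Finset.map_eq_of_subset fun v hv => by
    obtain ⟨t, ht, rfl⟩ := Finset.mem_map.mp hv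
    simp only [T, Finset.mem_filter, Finset.mem_univ, true_and] at ht ⊢
    exact h t ht
  by_contra hlt
  have hmem : σ i ∈ T.map σ.toEmbedding := by
    rw [hT]
    simpa [T] using hlt
  obtain ⟨t, ht, hti⟩ := Finset.mem_map.mp hmem
  obtain rfl : t = i := σ.injective hti
  simp only [T, Finset.mem_filter, Finset.mem_univ, true_and] at ht
  omega

/-- `σ(0) < σ(n-1)` after a sum split, `σ(n-1) < σ(0)` after a skew one. -/
theorem not_sumSplitsAt_and_complement {σ : Equiv.Perm (Fin n)} {j k : ℕ} (hj : 0 < j)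
    (hjn : j < n) (hk : 0 < k) (hkn : k < n) (h : SumSplitsAt σ j)
    (hc : SumSplitsAt (complement σ) k) : False := by
  have first_lt_last {τ : Equiv.Perm (Fin n)} {l : ℕ} (hl : 0 < l) (hln : l < n)
      (hτ : SumSplitsAt τ l) : τ ⟨0, by omega⟩ < τ ⟨n - 1, by omega⟩ :=
    Fin.lt_def.2 ((hτ _ hl).trans_le (hτ.le_apply (by simp only; omega)))
  have := first_lt_last hk hkn hc
  rw [complement_apply, complement_apply, Fin.rev_lt_rev] at this
  exact lt_asymm (first_lt_last hj hjn h) this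

theorem bplus_spec (σ : Equiv.Perm (Fin n)) (hn : 1 ≤ n) :
    1 ≤ Bplus σ ∧ SumSplitsAt σ (Bplus σ) :=
  Nat.sInf_mem (s := {j | 1 ≤ j ∧ SumSplitsAt σ j}) ⟨n, hn, sumSplitsAt_self σ⟩

theorem bplus_le_of_sumSplitsAt {σ : Equiv.Perm (Fin n)} {j : ℕ} (hj : 1 ≤ j)
    (h : SumSplitsAt σ j) : Bplus σ ≤ j :=
  Nat.sInf_le ⟨hj, h⟩

end SumSplit

section DirectSum

variable {a b : ℕ}

def directSum (α : Equiv.Perm (Fin a)) (β : Equiv.Perm (Fin b)) : Equiv.Perm (Fin (a + b)) :=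
  finSumFinEquiv.permCongr (α.sumCongr β)

@[simp]
theorem directSum_castAdd (α : Equiv.Perm (Fin a)) (β : Equiv.Perm (Fin b)) (i : Fin a) :
    directSum α β (Fin.castAdd b i) = Fin.castAdd b (α i) := by
  simp [directSum]

@[simp]
theorem directSum_natAdd (α : Equiv.Perm (Fin a)) (β : Equiv.Perm (Fin b)) (i : Fin b) :
    directSum α β (Fin.natAdd a i) = Fin.natAdd a (β i) := by
  simp [directSum]

theorem val_directSum_lt_iff (α : Equiv.Perm (Fin a)) (β : Equiv.Perm (Fin b)) (i : Fin (a + b)) :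
    (directSum α β i : ℕ) < a ↔ (i : ℕ) < a := by
  induction i using Fin.addCases <;> simp

theorem directSum_injective :
    Function.Injective2 (directSum : Equiv.Perm (Fin a) → Equiv.Perm (Fin b) → _) := by
  intro α α' β β' h
  have h' : α.sumCongr β = α'.sumCongr β' := finSumFinEquiv.permCongr.injective h
  simpa using Equiv.Perm.sumCongrHom_injective (a₁ := (α, β)) (a₂ := (α', β')) h'

theorem exists_directSum_eq {σ : Equiv.Perm (Fin (a + b))} (h : SumSplitsAt σ a) :
    ∃ α β, directSum α β = σ := by
  obtain ⟨⟨α, β⟩, hαβ⟩ := Equiv.Perm.mem_sumCongrHom_range_of_perm_mapsTo_inl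
    (σ := finSumFinEquiv.symm.permCongr σ) (by
      rintro _ ⟨i, rfl⟩
      refine ⟨Fin.castLT (σ (Fin.castAdd b i)) (h _ (by simp)), ?_⟩
      rw [Equiv.permCongr_apply, Equiv.eq_symm_apply]
      simp only [Equiv.symm_symm, finSumFinEquiv_apply_left, Fin.castAdd_castLT])
  rw [Equiv.Perm.sumCongrHom_apply] at hαβ
  refine ⟨α, β, ?_⟩
  rw [directSum, hαβ]
  ext i
  simp [Equiv.permCongr_apply]

theorem sumSplitsAt_directSum_iff (α : Equiv.Perm (Fin a)) (β : Equiv.Perm (Fin b)) {j : ℕ}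
    (hj : j ≤ a) : SumSplitsAt (directSum α β) j ↔ SumSplitsAt α j := by
  constructor
  · intro h i hi
    simpa using h (Fin.castAdd b i) (by simpa using hi)
  · intro h i hi
    have hia : (i : ℕ) < a := by omega
    rw [← Fin.castAdd_castLT b i hia, directSum_castAdd, Fin.val_castAdd]
    exact h _ hi

theorem bplus_directSum (α : Equiv.Perm (Fin a)) (β : Equiv.Perm (Fin b)) (ha : 1 ≤ a) :
    Bplus (directSum α β) = Bplus α := by
  obtain ⟨hα₁, hα⟩ := bplus_spec α ha
  obtain ⟨hσ₁, hσ⟩ := bplus_spec (directSum α β) (by omega)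
  have hαa : Bplus α ≤ a := bplus_le_of_sumSplitsAt ha (sumSplitsAt_self α)
  have hσa : Bplus (directSum α β) ≤ a := bplus_le_of_sumSplitsAt ha
    ((sumSplitsAt_directSum_iff α β le_rfl).2 (sumSplitsAt_self α))
  exact le_antisymm
    (bplus_le_of_sumSplitsAt hα₁ ((sumSplitsAt_directSum_iff α β hαa).2 hα))
    (bplus_le_of_sumSplitsAt hσ₁ ((sumSplitsAt_directSum_iff α β hσa).1 hσ))

variable {k : ℕ} {τ : Fin k → Fin k}

/-- No proper prefix of the positions of `τ` carries its smallest values. -/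
def SumIndecomposable (τ : Fin k → Fin k) : Prop :=
  ∀ t : Fin k, 0 < (t : ℕ) → ∃ x y, x < t ∧ t ≤ y ∧ τ y < τ x

theorem containsPattern_directSum_of_left (α : Equiv.Perm (Fin a)) (β : Equiv.Perm (Fin b))
    (h : ContainsPattern α τ) : ContainsPattern (directSum α β) τ :=
  let ⟨_, hf, hpat⟩ := (containsPattern_iff_of_comp (Fin.strictMono_castAdd b)
    (Fin.strictMono_castAdd b) (directSum_castAdd α β)).1 h
  ⟨_, hf, hpat⟩

theorem containsPattern_directSum_of_right (α : Equiv.Perm (Fin a)) (β : Equiv.Perm (Fin b))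
    (h : ContainsPattern β τ) : ContainsPattern (directSum α β) τ :=
  let ⟨_, hf, hpat⟩ := (containsPattern_iff_of_comp (Fin.strictMono_natAdd a)
    (Fin.strictMono_natAdd a) (directSum_natAdd α β)).1 h
  ⟨_, hf, hpat⟩

theorem ContainsPattern.of_directSum {α : Equiv.Perm (Fin a)} {β : Equiv.Perm (Fin b)}
    (hτ : SumIndecomposable τ) (h : ContainsPattern (directSum α β) τ) :
    ContainsPattern α τ ∨ ContainsPattern β τ := by
  obtain ⟨f, hf, hpat⟩ := h
  by_cases hleft : ∀ x, (f x : ℕ) < a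
  · left
    refine (containsPattern_iff_of_comp (Fin.strictMono_castAdd b) (Fin.strictMono_castAdd b)
      (directSum_castAdd α β)).2 ⟨fun x => (f x).castLT (hleft x), ?_⟩
    simpa only [Function.comp_def, Fin.castAdd_castLT] using ⟨hf, hpat⟩
  by_cases hright : ∀ x, a ≤ (f x : ℕ)
  · right
    have hfb : ∀ x, (f x : ℕ) - a < b := fun x => by have := (f x).isLt; have := hright x; omega
    have hf_eq : ∀ x, Fin.natAdd a ⟨f x - a, hfb x⟩ = f x := fun x => by
      ext
      simp only [Fin.val_natAdd]
      have := hright x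
      omega
    refine (containsPattern_iff_of_comp (Fin.strictMono_natAdd a) (Fin.strictMono_natAdd a)
      (directSum_natAdd α β)).2 ⟨fun x => ⟨f x - a, hfb x⟩, ?_⟩
    simpa only [Function.comp_def, hf_eq] using ⟨hf, hpat⟩
  -- `t` is the first position in the `β` block; every value of the `α` block lies below every
  -- value of the `β` block, so `τ` would split at `t`.
  push Not at hleft hright
  obtain ⟨t, ht, ht_min⟩ := wellFounded_lt.has_min {x | a ≤ (f x : ℕ)} hleft
  obtain ⟨z, hz⟩ := hright
  have ht0 : 0 < (t : ℕ) := by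
    by_contra ht0
    have htz : t ≤ z := Fin.le_def.2 (by omega)
    exact absurd (ht.trans (Fin.le_def.1 (hf.monotone htz))) (not_le.2 hz)
  obtain ⟨x, y, hxt, hty, hyx⟩ := hτ t ht0
  have hx : (f x : ℕ) < a := not_le.1 fun hx => ht_min x hx hxt
  have hy : a ≤ (f y : ℕ) := ht.trans (Fin.le_def.1 (hf.monotone hty))
  have hval : directSum α β (f x) < directSum α β (f y) := by
    rw [Fin.lt_def]
    have := (val_directSum_lt_iff α β (f x)).2 hx
    have := (val_directSum_lt_iff α β (f y)).not.2 (not_lt.2 hy)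
    omega
  exact (lt_asymm hyx ((hpat x y).2 hval)).elim

theorem separable_directSum_iff (α : Equiv.Perm (Fin a)) (β : Equiv.Perm (Fin b)) :
    Separable (directSum α β) ↔ Separable α ∧ Separable β := by
  have h2413 : SumIndecomposable (![1, 3, 0, 2] : Fin 4 → Fin 4) := by
    unfold SumIndecomposable
    decide
  have h3142 : SumIndecomposable (![2, 0, 3, 1] : Fin 4 → Fin 4) := by
    unfold SumIndecomposable
    decide
  constructor
  · rintro ⟨h₁, h₂⟩
    exact ⟨⟨fun h => h₁ (containsPattern_directSum_of_left α β h),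
        fun h => h₂ (containsPattern_directSum_of_left α β h)⟩,
      ⟨fun h => h₁ (containsPattern_directSum_of_right α β h),
        fun h => h₂ (containsPattern_directSum_of_right α β h)⟩⟩
  · rintro ⟨⟨hα₁, hα₂⟩, ⟨hβ₁, hβ₂⟩⟩
    exact ⟨fun h => (h.of_directSum h2413).elim hα₁ hβ₁,
      fun h => (h.of_directSum h3142).elim hα₂ hβ₂⟩

end DirectSum

section Dichotomy

variable {n : ℕ}

theorem card_filter_le_val_lt (n : ℕ) {lo hi : ℕ} (hlohi : lo ≤ hi) :
    #{v : Fin n | lo ≤ (v : ℕ) ∧ (v : ℕ) < hi} = min n hi - min n lo := by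
  have h : univ.filter (fun v : Fin n => lo ≤ (v : ℕ) ∧ (v : ℕ) < hi) =
      univ.filter (fun v : Fin n => (v : ℕ) < hi) \
        univ.filter (fun v : Fin n => (v : ℕ) < lo) := by
    ext v
    simp only [Finset.mem_filter, Finset.mem_univ, true_and, Finset.mem_sdiff, not_lt]
    omega
  rw [h, Finset.card_sdiff_of_subset, Fin.card_filter_val_lt, Fin.card_filter_val_lt]
  intro v
  simp only [Finset.mem_filter, Finset.mem_univ, true_and]
  omega

theorem min_eq_of_forall_lt_iff {σ : Equiv.Perm (Fin n)} {k lo hi : ℕ} (hlohi : lo ≤ hi)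
    (h : ∀ i : Fin n, (i : ℕ) < k ↔ lo ≤ (σ i : ℕ) ∧ (σ i : ℕ) < hi) :
    min n k = min n hi - min n lo := by
  rw [← Fin.card_filter_val_lt, ← card_filter_le_val_lt n hlohi]
  exact Finset.card_equiv σ (by simp [h])

def PrefixIsInterval (σ : Equiv.Perm (Fin n)) (k m : ℕ) : Prop :=
  ∀ i : Fin n, (i : ℕ) < k ↔ m ≤ (σ i : ℕ) ∧ (σ i : ℕ) < m + k

theorem prefixIsInterval_one (σ : Equiv.Perm (Fin n)) (hn : 0 < n) :
    PrefixIsInterval σ 1 (σ ⟨0, hn⟩) := by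
  intro i
  constructor
  · intro hi
    obtain rfl : i = ⟨0, hn⟩ := Fin.ext (Nat.lt_one_iff.1 hi)
    exact ⟨le_rfl, Nat.lt_succ_self _⟩
  · rintro ⟨h₁, h₂⟩
    obtain rfl : i = ⟨0, hn⟩ := σ.injective (Fin.ext (by omega))
    simp

theorem PrefixIsInterval.complement {σ : Equiv.Perm (Fin n)} {k m : ℕ}
    (h : PrefixIsInterval σ k m) (hmk : m + k ≤ n) :
    PrefixIsInterval (complement σ) k (n - m - k) := fun i => by
  rw [h i, val_complement]
  have := (σ i).isLt
  omega

theorem PrefixIsInterval.exists_first_above {σ : Equiv.Perm (Fin n)} {k m : ℕ}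
    (hI : PrefixIsInterval σ k m) (hkn : k < n) (hmk : m + k < n)
    (hlow : (σ ⟨k, hkn⟩ : ℕ) < m) :
    ∃ r : Fin n, k < (r : ℕ) ∧ m + k ≤ (σ r : ℕ) ∧ ∀ i < r, (σ i : ℕ) < m + k := by
  obtain ⟨r, hr, hr_min⟩ := wellFounded_lt.has_min {i : Fin n | m + k ≤ (σ i : ℕ)}
    ⟨σ.symm ⟨m + k, hmk⟩, by simp⟩
  replace hr : m + k ≤ (σ r : ℕ) := hr
  refine ⟨r, ?_, hr, fun i hi => not_le.1 fun h => hr_min i h hi⟩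
  by_contra hrk
  rcases (Nat.le_of_not_lt hrk).lt_or_eq with hrk | hrk
  · have := (hI r).1 hrk
    omega
  · obtain rfl : r = ⟨k, hkn⟩ := Fin.ext hrk
    omega

theorem PrefixIsInterval.extend {σ : Equiv.Perm (Fin n)} {k m : ℕ} (hI : PrefixIsInterval σ k m)
    (hk : 0 < k) (hkn : k < n) (hmk : m + k < n) (hlow : (σ ⟨k, hkn⟩ : ℕ) < m)
    (h3142 : ¬ ContainsPattern σ ![2, 0, 3, 1]) :
    ∃ k' m', k < k' ∧ k' < n ∧ PrefixIsInterval σ k' m' := by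
  obtain ⟨r, hkr, hr, below⟩ := hI.exists_first_above hkn hmk hlow
  have low : ∀ i : Fin n, k ≤ (i : ℕ) → i < r → (σ i : ℕ) < m := fun i hki hir => by
    have := below i hir
    have := (hI i).not.1 (by omega)
    omega
  obtain ⟨l, hl, hl_min⟩ := Finset.exists_min_image {i : Fin n | k ≤ (i : ℕ) ∧ i < r}
    (fun i => (σ i : ℕ)) ⟨⟨k, hkn⟩, Finset.mem_filter.2 ⟨Finset.mem_univ _, le_rfl, hkr⟩⟩
  simp only [Finset.mem_filter, Finset.mem_univ, true_and] at hl hl_min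
  have hσ₀ := (hI ⟨0, by omega⟩).1 hk
  -- `l` carries the least value in `[k, r)`; a value of `(σ l, m)` to the right of `r` would
  -- give `3142` at the positions `0, l, r, i`.
  have hiff : ∀ i : Fin n, (i : ℕ) < r ↔ (σ l : ℕ) ≤ σ i ∧ (σ i : ℕ) < m + k := by
    intro i
    constructor
    · intro hi
      refine ⟨?_, below i hi⟩
      rcases lt_or_ge (i : ℕ) k with hik | hki
      · have := (hI i).1 hik
        have := low l hl.1 hl.2
        omega
      · exact hl_min i ⟨hki, hi⟩
    · rintro ⟨h₁, h₂⟩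
      by_contra hri
      have him : (σ i : ℕ) < m := by
        by_contra
        have := (hI i).2 ⟨by omega, h₂⟩
        omega
      have hli : (σ l : ℕ) < σ i := h₁.lt_of_ne fun h => by
        obtain rfl : l = i := σ.injective (Fin.ext h)
        exact hri hl.2
      have hri' : r < i := Fin.lt_def.2 <| (Nat.le_of_not_lt hri).lt_of_ne fun h => by
        obtain rfl : r = i := Fin.ext h
        omega
      refine h3142 (containsPattern_3142 (p₀ := ⟨0, by omega⟩) ?_ hl.2 hri' ?_ ?_ ?_) <;>
        simp only [Fin.lt_def] <;> omega
  have hcard := min_eq_of_forall_lt_iff (below l hl.2).le hiff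
  refine ⟨r, σ l, hkr, r.isLt, fun i => ?_⟩
  rw [hiff i, show (σ l : ℕ) + r = m + k by have := r.isLt; have := (σ l).isLt; omega]

theorem exists_sumSplitsAt_of_prefixIsInterval {σ : Equiv.Perm (Fin n)} {k m : ℕ}
    (hσ : Separable σ) (hI : PrefixIsInterval σ k m) (hk : 0 < k) (hkn : k < n) :
    ∃ j, 0 < j ∧ j < n ∧ (SumSplitsAt σ j ∨ SumSplitsAt (complement σ) j) := by
  induction h : n - k using Nat.strong_induction_on generalizing σ k m with
  | _ d ih =>
  rcases Nat.eq_zero_or_pos m with rfl | hm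
  · exact ⟨k, hk, hkn, Or.inl fun i hi => by have := (hI i).1 hi; omega⟩
  by_cases hmk : n ≤ m + k
  · refine ⟨k, hk, hkn, Or.inr fun i hi => ?_⟩
    have := (hI i).1 hi
    rw [val_complement]
    omega
  push Not at hmk
  have hσk := (hI ⟨k, hkn⟩).not.1 (lt_irrefl k)
  rcases lt_or_ge (σ ⟨k, hkn⟩ : ℕ) m with hlow | hhigh
  · obtain ⟨k', m', hkk', hk'n, hI'⟩ := hI.extend hk hkn hmk hlow hσ.2
    exact ih (n - k') (by omega) hσ hI' (by omega) hk'n rfl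
  · have hσc := (separable_complement_iff σ).2 hσ
    obtain ⟨k', m', hkk', hk'n, hI'⟩ := (hI.complement hmk.le).extend hk hkn (by omega)
      (by rw [val_complement]; omega) hσc.2
    obtain ⟨j, hj, hjn, hsplit⟩ := ih (n - k') (by omega) hσc hI' (by omega) hk'n rfl
    rw [complement_complement, or_comm] at hsplit
    exact ⟨j, hj, hjn, hsplit⟩

theorem Separable.exists_sumSplitsAt (hn : 2 ≤ n) {σ : Equiv.Perm (Fin n)} (hσ : Separable σ) :
    ∃ j, 0 < j ∧ j < n ∧ (SumSplitsAt σ j ∨ SumSplitsAt (complement σ) j) :=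
  exists_sumSplitsAt_of_prefixIsInterval hσ (prefixIsInterval_one σ (by omega)) one_pos
    (by omega)

theorem bplus_complement_eq_iff (hn : 2 ≤ n) {σ : Equiv.Perm (Fin n)} (hσ : Separable σ) :
    Bplus (complement σ) = n ↔ Bplus σ < n := by
  obtain ⟨hb₁, hb⟩ := bplus_spec σ (by omega)
  obtain ⟨hc₁, hc⟩ := bplus_spec (complement σ) (by omega)
  have hcn := bplus_le_of_sumSplitsAt (by omega) (sumSplitsAt_self (complement σ))
  constructor
  · intro hc_eq
    obtain ⟨j, hj, hjn, hsplit | hsplit⟩ := hσ.exists_sumSplitsAt hn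
    · exact (bplus_le_of_sumSplitsAt hj hsplit).trans_lt hjn
    · have := bplus_le_of_sumSplitsAt hj hsplit
      omega
  · intro hlt
    by_contra hne
    exact not_sumSplitsAt_and_complement hb₁ hlt hc₁ (lt_of_le_of_ne hcn hne) hb hc

end Dichotomy

section Counting

variable {n : ℕ}

theorem mem_SEP {σ : Equiv.Perm (Fin n)} : σ ∈ SEP n ↔ Separable σ := by
  simp [SEP]

theorem card_SEP_one : #(SEP 1) = 1 := by
  have : SEP 1 = univ := Finset.filter_true_of_mem fun σ _ =>
    ⟨not_containsPattern_of_lt σ _ (by norm_num), not_containsPattern_of_lt σ _ (by norm_num)⟩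
  rw [this, Finset.card_univ, Fintype.card_perm, Fintype.card_fin, Nat.factorial_one]

theorem card_SEP_filter_bplus_one : #{σ ∈ SEP 1 | Bplus σ = 1} = 1 := by
  rw [Finset.filter_true_of_mem fun σ _ => le_antisymm
    (bplus_le_of_sumSplitsAt le_rfl (sumSplitsAt_self σ)) (bplus_spec σ le_rfl).1, card_SEP_one]

theorem card_SEP_filter_bplus_eq {j : ℕ} (hj : 1 ≤ j) (hjn : j ≤ n) :
    #{σ ∈ SEP n | Bplus σ = j} = #{α ∈ SEP j | Bplus α = j} * #(SEP (n - j)) := by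
  obtain ⟨b, rfl⟩ := Nat.exists_eq_add_of_le hjn
  rw [Nat.add_sub_cancel_left, ← Finset.card_product]
  symm
  apply Finset.card_nbij (fun p => directSum p.1 p.2)
  · rintro ⟨α, β⟩ hp
    simp only [Finset.coe_product, Set.mem_prod, Finset.coe_filter, Set.mem_ofPred_eq,
      Finset.mem_coe, mem_SEP] at hp ⊢
    rw [separable_directSum_iff, bplus_directSum α β hj]
    exact ⟨⟨hp.1.1, hp.2⟩, hp.1.2⟩
  · rintro ⟨α, β⟩ - ⟨α', β'⟩ - h
    obtain ⟨rfl, rfl⟩ := directSum_injective h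
    rfl
  · intro σ hσ
    simp only [Finset.coe_filter, Set.mem_ofPred_eq, mem_SEP] at hσ
    obtain ⟨α, β, rfl⟩ := exists_directSum_eq (hσ.2 ▸ (bplus_spec σ (by omega)).2)
    rw [separable_directSum_iff, bplus_directSum α β hj] at hσ
    exact ⟨(α, β), by simp [mem_SEP, hσ], rfl⟩

theorem card_SEP_eq_sum (hn : 1 ≤ n) :
    #(SEP n) = ∑ j ∈ Icc 1 n, #{σ ∈ SEP n | Bplus σ = j} :=
  Finset.card_eq_sum_card_fiberwise fun σ _ => by
    have := (bplus_spec σ hn).1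
    have := bplus_le_of_sumSplitsAt hn (sumSplitsAt_self σ)
    simp only [Finset.coe_Icc, Set.mem_Icc]
    omega

/-- Complementation exchanges the sum-indecomposable and the sum-decomposable ones. -/
theorem two_mul_card_SEP_filter_bplus_self (hn : 2 ≤ n) :
    2 * #{σ ∈ SEP n | Bplus σ = n} = #(SEP n) := by
  have hdec : #{σ ∈ SEP n | ¬ Bplus σ = n} = #{σ ∈ SEP n | Bplus σ = n} := by
    apply Finset.card_nbij' complement complement
    · intro σ hσ
      simp only [Finset.coe_filter, Set.mem_ofPred_eq, mem_SEP] at hσ ⊢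
      have hlt := lt_of_le_of_ne (bplus_le_of_sumSplitsAt (by omega) (sumSplitsAt_self σ)) hσ.2
      exact ⟨(separable_complement_iff σ).2 hσ.1, (bplus_complement_eq_iff hn hσ.1).2 hlt⟩
    · intro σ hσ
      simp only [Finset.coe_filter, Set.mem_ofPred_eq, mem_SEP] at hσ ⊢
      have hσc := (separable_complement_iff σ).2 hσ.1
      have := (bplus_complement_eq_iff hn hσc).1 (by rw [complement_complement]; exact hσ.2)
      exact ⟨hσc, this.ne⟩
    · intro σ _
      exact complement_complement σ
    · intro σ _
      exact complement_complement σ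
  have := Finset.card_filter_add_card_filter_not (s := SEP n) (fun σ => Bplus σ = n)
  omega

theorem two_mul_card_SEP (hn : 2 ≤ n) :
    2 * #(SEP n) =
      2 * #(SEP (n - 1)) + ∑ j ∈ Icc 2 (n - 1), #(SEP j) * #(SEP (n - j)) + #(SEP n) := by
  have hsum := card_SEP_eq_sum (n := n) (by omega)
  rw [show Icc 1 n = insert 1 (insert n (Icc 2 (n - 1))) by ext; simp; omega,
    Finset.sum_insert (by simp; omega), Finset.sum_insert (by simp; omega)] at hsum
  have hfirst : #{σ ∈ SEP n | Bplus σ = 1} = #(SEP (n - 1)) := by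
    rw [card_SEP_filter_bplus_eq le_rfl (by omega), card_SEP_filter_bplus_one, one_mul]
  have hmiddle : ∑ j ∈ Icc 2 (n - 1), #(SEP j) * #(SEP (n - j)) =
      2 * ∑ j ∈ Icc 2 (n - 1), #{σ ∈ SEP n | Bplus σ = j} := by
    rw [Finset.mul_sum]
    refine Finset.sum_congr rfl fun j hj => ?_
    rw [Finset.mem_Icc] at hj
    rw [card_SEP_filter_bplus_eq (by omega) (by omega),
      ← two_mul_card_SEP_filter_bplus_self (n := j) hj.1, mul_assoc]
  have hlast := two_mul_card_SEP_filter_bplus_self hn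
  omega

end Counting

/-- The recursion `sₙ = s₁ sₙ₋₁ + (1/2) ∑_{j=2}^{n-1} sⱼ sₙ₋ⱼ + (1/2) sₙ` for the number
`sₙ = |SEP(n)|` of separable permutations, with `s₁ = 1`. -/
theorem sep_card_recursion :
    (SEP 1).card = 1 ∧
    ∀ n : ℕ, 2 ≤ n →
      ((SEP n).card : ℝ) =
        ((SEP 1).card : ℝ) * ((SEP (n - 1)).card : ℝ) +
        (1 / 2) * ∑ j ∈ Finset.Icc 2 (n - 1), ((SEP j).card : ℝ) * ((SEP (n - j)).card : ℝ) +
        (1 / 2) * ((SEP n).card : ℝ) := by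
  refine ⟨card_SEP_one, fun n hn => ?_⟩
  have h : (2 * #(SEP n) : ℝ) =
      2 * #(SEP (n - 1)) + ∑ j ∈ Icc 2 (n - 1), (#(SEP j) * #(SEP (n - j)) : ℝ) + #(SEP n) := by
    exact_mod_cast two_mul_card_SEP hn
  rw [card_SEP_one, Nat.cast_one]
  linarith
end
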